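/- Let H ⊆ ℝ^J be nonempty, closed, and convex with w₀ ∈ H, let A be a symmetric positive definite J×J real matrix, and let (c_n) be a sequence of positive reals with c_n → ∞. Set K_n := {c_n (h − w₀) : h ∈ H} and let T_{H,w₀} be the closure of {λ(h − w₀) : h ∈ H, λ ≥ 0}. Then for every x ∈ ℝ^J, Π_{K_n,A} x → Π_{T_{H,w₀},A} x as n → ∞, where Π_{K,A} z denotes the unique minimizer of (z − λ)ᵀA(z − λ) over λ ∈ K (each K_n is nonempty, closed, and convex). -/

import Mathlib

open Matrix Filter Topology

/-!
Write `f v = Q (x - v)` with `Q v = vᵀ A v` and `S = {l • (h - w₀) : h ∈ H, 0 ≤ l}`, so that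
`T = closure S`. By convexity of `H`, each point `l • (h - w₀)` of `S` lies in `Kₙ` as soon as
`l ≤ cₙ`, while `Kₙ ⊆ S ⊆ T` once `cₙ ≥ 0`; hence the minimal values `f pₙ` converge to
`f q = inf_T f`. The parallelogram law at the midpoint of `pₙ` and `q`, which lies in the
convex set `T`, gives `Q (pₙ - q) ≤ 2 (f pₙ - f q)`, and a positive definite form on a
finite-dimensional space dominates a multiple of `‖·‖²`.
-/

theorem Matrix.toQuadraticForm'_apply {R n : Type*} [CommRing R] [Fintype n] [DecidableEq n]
    (A : Matrix n n R) (v : n → R) : A.toQuadraticForm' v = v ⬝ᵥ A *ᵥ v := by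
  simp [Matrix.toQuadraticForm', toLinearMap₂'_apply']

theorem Matrix.continuous_toQuadraticForm' {R n : Type*} [CommRing R] [TopologicalSpace R]
    [IsTopologicalRing R] [Fintype n] [DecidableEq n] (A : Matrix n n R) :
    Continuous A.toQuadraticForm' :=
  (continuous_id.dotProduct (continuous_const.matrix_mulVec continuous_id)).congr
    fun v => (A.toQuadraticForm'_apply v).symm

theorem convex_setOf_exists_smul_sub {E : Type*} [AddCommGroup E] [Module ℝ E] {H : Set E}
    (hH : Convex ℝ H) {w₀ : E} (hw₀ : w₀ ∈ H) :
    Convex ℝ {v : E | ∃ h ∈ H, ∃ l : ℝ, 0 ≤ l ∧ v = l • (h - w₀)} := by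
  convert (ConvexCone.hull ℝ ((fun h => -w₀ + h) '' H)).convex using 1
  ext v
  rw [Set.mem_ofPred_eq, SetLike.mem_coe, ConvexCone.mem_hull_of_convex (hH.translate _)]
  constructor
  · rintro ⟨h, hh, l, hl, rfl⟩
    rcases hl.eq_or_lt with rfl | hl
    · exact ⟨1, one_pos, 0, ⟨w₀, hw₀, neg_add_cancel w₀⟩, by simp⟩
    · exact ⟨l, hl, _, ⟨h, hh, rfl⟩, by simp [sub_eq_neg_add]⟩
  · rintro ⟨r, hr, _, ⟨h, hh, rfl⟩, rfl⟩
    exact ⟨h, hh, r, hr.le, by simp [sub_eq_neg_add]⟩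

theorem Convex.smul_sub_mem_image_smul_sub {E : Type*} [AddCommGroup E] [Module ℝ E] {H : Set E}
    (hH : Convex ℝ H) {w₀ h : E} (hw₀ : w₀ ∈ H) (hh : h ∈ H) {l c : ℝ} (hl : 0 ≤ l)
    (hlc : l ≤ c) (hc : 0 < c) :
    l • (h - w₀) ∈ (fun h => c • (h - w₀)) '' H := by
  refine ⟨w₀ + (l / c) • (h - w₀),
    hH.add_smul_sub_mem hw₀ hh ⟨div_nonneg hl hc.le, div_le_one_of_le₀ hlc hc.le⟩, ?_⟩
  simp only [add_sub_cancel_left, smul_smul, mul_div_cancel₀ l hc.ne']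

theorem tendsto_apply_of_isMinOn_of_eventually_mem {X ι : Type*} [TopologicalSpace X]
    {L : Filter ι} {f : X → ℝ} (hf : Continuous f) {S : Set X} {K : ι → Set X}
    (hSK : ∀ v ∈ S, ∀ᶠ i in L, v ∈ K i) {p : ι → X} (hp : ∀ i, IsMinOn f (K i) (p i))
    {q : X} (hq : q ∈ closure S) (hpq : ∀ᶠ i in L, f q ≤ f (p i)) :
    Tendsto (fun i => f (p i)) L (𝓝 (f q)) := by
  refine tendsto_order.2 ⟨fun a ha => hpq.mono fun i hi => ha.trans_le hi, fun b hb => ?_⟩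
  obtain ⟨v, hvb, hvS⟩ := mem_closure_iff.1 hq _ (isOpen_lt hf continuous_const) hb
  exact (hSK v hvS).mono fun i hi => (hp i hi).trans_lt hvb

namespace QuadraticMap

theorem map_add_add_map_sub {R M N : Type*} [CommRing R] [AddCommGroup M] [Module R M]
    [AddCommGroup N] [Module R N] (Q : QuadraticMap R M N) (u v : M) :
    Q (u + v) + Q (u - v) = 2 • Q u + 2 • Q v := by
  have h := Q.polar_neg_right u v
  rw [polar, polar, QuadraticMap.map_neg, ← sub_eq_add_neg] at h
  rw [← sub_eq_zero, ← eq_neg_iff_add_eq_zero.1 h, two_smul, two_smul]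
  abel

variable {E : Type*}

theorem map_sub_le_of_isMinOn [AddCommGroup E] [Module ℝ E] (Q : QuadraticForm ℝ E) {T : Set E}
    (hT : Convex ℝ T) {x p q : E} (hpT : p ∈ T) (hqT : q ∈ T)
    (hq : IsMinOn (fun v => Q (x - v)) T q) :
    Q (p - q) ≤ 2 * (Q (x - p) - Q (x - q)) := by
  have hmid : Q (x - q) ≤ Q (x - ((1 / 2 : ℝ) • p + (1 / 2 : ℝ) • q)) :=
    hq (hT hpT hqT (by norm_num) (by norm_num) (by norm_num))
  have hpar := Q.map_add_add_map_sub (x - q) (x - p)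
  rw [show x - ((1 / 2 : ℝ) • p + (1 / 2 : ℝ) • q) = (1 / 2 : ℝ) • ((x - q) + (x - p)) by
    module, QuadraticMap.map_smul] at hmid
  rw [show x - q - (x - p) = p - q by abel] at hpar
  simp only [smul_eq_mul] at hmid
  simp only [nsmul_eq_mul, Nat.cast_ofNat] at hpar
  linarith

variable [NormedAddCommGroup E] [NormedSpace ℝ E] [FiniteDimensional ℝ E] {Q : QuadraticForm ℝ E}

theorem PosDef.exists_pos_mul_norm_sq_le (hQ : Q.PosDef) (hQc : Continuous Q) :
    ∃ m > 0, ∀ v, m * ‖v‖ ^ 2 ≤ Q v := by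
  cases subsingleton_or_nontrivial E
  · exact ⟨1, one_pos, fun v => by simp [Subsingleton.elim v 0]⟩
  obtain ⟨u, hu, hmin⟩ := (isCompact_sphere (0 : E) 1).exists_isMinOn
    (NormedSpace.sphere_nonempty.2 zero_le_one) hQc.continuousOn
  have hu0 : u ≠ 0 := ne_zero_of_mem_unit_sphere ⟨u, hu⟩
  refine ⟨Q u, hQ u hu0, fun v => ?_⟩
  rcases eq_or_ne v 0 with rfl | hv
  · simp
  have hv_pos : 0 < ‖v‖ := norm_pos_iff.2 hv
  have h : Q u ≤ Q (‖v‖⁻¹ • v) := hmin (by simp [norm_smul, hv_pos.ne'])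
  simp only [QuadraticMap.map_smul, smul_eq_mul] at h
  rwa [← mul_inv, ← pow_two, ← div_eq_inv_mul, le_div_iff₀ (by positivity)] at h

theorem PosDef.tendsto_of_tendsto_map_sub {ι : Type*} {L : Filter ι} (hQ : Q.PosDef)
    (hQc : Continuous Q) {p : ι → E} {q : E} (h : Tendsto (fun i => Q (p i - q)) L (𝓝 0)) :
    Tendsto p L (𝓝 q) := by
  obtain ⟨m, hm, hmQ⟩ := hQ.exists_pos_mul_norm_sq_le hQc
  have hsq : Tendsto (fun i => ‖p i - q‖ ^ 2) L (𝓝 0) :=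
    squeeze_zero (fun _ => sq_nonneg _) (fun i => (le_div_iff₀' hm).2 (hmQ _))
      (by simpa using h.div_const m)
  rw [tendsto_iff_norm_sub_tendsto_zero]
  simpa using hsq.sqrt

theorem PosDef.tendsto_of_isMinOn {ι : Type*} {L : Filter ι} (hQ : Q.PosDef) (hQc : Continuous Q)
    {S : Set E} (hS : Convex ℝ S) {K : ι → Set E} (hSK : ∀ v ∈ S, ∀ᶠ i in L, v ∈ K i)
    {x q : E} {p : ι → E} (hpS : ∀ᶠ i in L, p i ∈ S)
    (hp : ∀ i, IsMinOn (fun v => Q (x - v)) (K i) (p i)) (hqS : q ∈ closure S)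
    (hq : IsMinOn (fun v => Q (x - v)) (closure S) q) :
    Tendsto p L (𝓝 q) := by
  have hpS' : ∀ᶠ i in L, p i ∈ closure S := hpS.mono fun i hi => subset_closure hi
  have hval : Tendsto (fun i => Q (x - p i)) L (𝓝 (Q (x - q))) :=
    tendsto_apply_of_isMinOn_of_eventually_mem (hQc.comp (continuous_sub_left x)) hSK hp hqS
      (hpS'.mono fun i hi => hq hi)
  refine hQ.tendsto_of_tendsto_map_sub hQc (squeeze_zero' (.of_forall fun i => hQ.nonneg _)
    (hpS'.mono fun i hi => Q.map_sub_le_of_isMinOn hS.closure hi hqS hq) ?_)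
  simpa using (hval.sub_const (Q (x - q))).const_mul 2

end QuadraticMap

theorem rescaled_projection_tendsto_tangent_cone_projection_general
    (J : ℕ)
    (H : Set (Fin J → ℝ))
    (hHconv : Convex ℝ H)
    (w₀ : Fin J → ℝ) (hw₀ : w₀ ∈ H)
    (A : Matrix (Fin J) (Fin J) ℝ)
    (hApd : A.PosDef)
    (c : ℕ → ℝ) (hc : Tendsto c atTop atTop)
    (K : ℕ → Set (Fin J → ℝ))
    (hK : ∀ n, K n = (fun h : Fin J → ℝ => c n • (h - w₀)) '' H)
    (T : Set (Fin J → ℝ))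
    (hT : T = closure {v : Fin J → ℝ | ∃ h ∈ H, ∃ l : ℝ, 0 ≤ l ∧ v = l • (h - w₀)})
    (x : Fin J → ℝ)
    (p : ℕ → Fin J → ℝ)
    (hp : ∀ n, p n ∈ K n ∧
      ∀ l ∈ K n, (x - p n) ⬝ᵥ A.mulVec (x - p n) ≤ (x - l) ⬝ᵥ A.mulVec (x - l))
    (q : Fin J → ℝ)
    (hq : q ∈ T ∧
      ∀ l ∈ T, (x - q) ⬝ᵥ A.mulVec (x - q) ≤ (x - l) ⬝ᵥ A.mulVec (x - l)) :
    Tendsto p atTop (𝓝 q) := by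
  subst hT
  refine hApd.toQuadraticForm'.tendsto_of_isMinOn A.continuous_toQuadraticForm'
    (convex_setOf_exists_smul_sub hHconv hw₀) ?_ ?_
    (fun n => isMinOn_iff.2 <| by simpa only [Matrix.toQuadraticForm'_apply] using (hp n).2) hq.1
    (isMinOn_iff.2 <| by simpa only [Matrix.toQuadraticForm'_apply] using hq.2)
  · rintro _ ⟨h, hh, l, hl, rfl⟩
    filter_upwards [hc.eventually_ge_atTop l, hc.eventually_gt_atTop 0] with n hln hn
    exact hK n ▸ hHconv.smul_sub_mem_image_smul_sub hw₀ hh hl hln hn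
  · filter_upwards [hc.eventually_ge_atTop 0] with n hn
    obtain ⟨h, hh, hpn⟩ := hK n ▸ (hp n).1
    exact ⟨h, hh, c n, hn, hpn.symm⟩

/-- Projections onto the rescaled constraint sets `Kₙ = cₙ(H − w₀)` with
`cₙ → ∞` converge to the projection onto the tangent cone
`T_{H,w₀} = closure {c(h − w₀) : h ∈ H, c ≥ 0}`: if `pₙ` is the unique
minimizer of `(x − λ)ᵀA(x − λ)` over `Kₙ` and `q` the unique minimizer over
`T_{H,w₀}`, then `pₙ → q`. -/
theorem rescaled_projection_tendsto_tangent_cone_projection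
    (J : ℕ) (hJ : 0 < J)
    (H : Set (Fin J → ℝ))
    (hHne : H.Nonempty) (hHcl : IsClosed H) (hHconv : Convex ℝ H)
    (w₀ : Fin J → ℝ) (hw₀ : w₀ ∈ H)
    (A : Matrix (Fin J) (Fin J) ℝ)
    (hAsymm : A.IsSymm) (hApd : A.PosDef)
    (c : ℕ → ℝ) (hcpos : ∀ n, 0 < c n) (hc : Tendsto c atTop atTop)
    (K : ℕ → Set (Fin J → ℝ))
    (hK : ∀ n, K n = (fun h : Fin J → ℝ => c n • (h - w₀)) '' H)
    (T : Set (Fin J → ℝ))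
    (hT : T = closure {v : Fin J → ℝ | ∃ h ∈ H, ∃ l : ℝ, 0 ≤ l ∧ v = l • (h - w₀)})
    (x : Fin J → ℝ)
    (p : ℕ → Fin J → ℝ)
    (hp : ∀ n, p n ∈ K n ∧
      ∀ l ∈ K n, (x - p n) ⬝ᵥ A.mulVec (x - p n) ≤ (x - l) ⬝ᵥ A.mulVec (x - l))
    (q : Fin J → ℝ)
    (hq : q ∈ T ∧
      ∀ l ∈ T, (x - q) ⬝ᵥ A.mulVec (x - q) ≤ (x - l) ⬝ᵥ A.mulVec (x - l)) :
    Tendsto p atTop (𝓝 q) :=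
  rescaled_projection_tendsto_tangent_cone_projection_general J H hHconv w₀ hw₀ A hApd c hc K hK T
    hT x p hp q hq
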